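/- arXiv:2410.18493 — 6 statements merged into one kernel-verified Lean document; each statement's English description precedes it below -/
import Mathlib

section
/- Let R be a commutative Noetherian ring and let T = R[[X]]_X be the localization of the power series ring R[[X]] at the multiplicative set of powers of X. Then T is a faithfully flat R-algebra. -/
set_option maxHeartbeats 1000000
set_option synthInstance.maxHeartbeats 1000000

/-- The height of a prime ideal: the Krull dimension of the localization at it. -/
noncomputable def ht {R : Type*} [CommRing R] (p : Ideal R) [p.IsPrime] : WithBot (WithTop ℕ) :=
  ringKrullDim (Localization.AtPrime p)

/-- A (Noetherian) local ring is regular if its maximal ideal is generated by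
`dim` many elements. -/
def IsRegularLocal (A : Type*) [CommRing A] [IsLocalRing A] : Prop :=
  IsNoetherianRing A ∧ ∃ s : Finset A,
    Ideal.span (s : Set A) = IsLocalRing.maximalIdeal A ∧
    (s.card : WithBot (WithTop ℕ)) = ringKrullDim A

/-- A commutative ring is regular if all its localizations at primes are regular local. -/
def IsRegularRing' (R : Type*) [CommRing R] : Prop :=
  ∀ (p : Ideal R) [p.IsPrime], IsRegularLocal (Localization.AtPrime p)

/-- A local ring is Cohen-Macaulay if there is a regular sequence in the maximal ideal
of length equal to the Krull dimension. -/
def IsCMLocal (A : Type*) [CommRing A] [IsLocalRing A] : Prop :=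
  ∃ rs : List A, (∀ x ∈ rs, x ∈ IsLocalRing.maximalIdeal A) ∧
    RingTheory.Sequence.IsRegular A rs ∧
    (rs.length : WithBot (WithTop ℕ)) = ringKrullDim A

/-- A commutative ring is Cohen-Macaulay if all localizations at primes are CM local. -/
def IsCMRing (R : Type*) [CommRing R] : Prop :=
  ∀ (p : Ideal R) [p.IsPrime], IsCMLocal (Localization.AtPrime p)

/-- Serre's condition `R_i`: the localization at every prime of height at most `i`
is a regular local ring. -/
def SerreR (A : Type*) [CommRing A] (i : ℕ) : Prop :=
  ∀ (q : Ideal A) [q.IsPrime], ht q ≤ (i : WithBot (WithTop ℕ)) →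
    IsRegularLocal (Localization.AtPrime q)

/-- `T = R[[X]]_X`, the localization of the power series ring at `X`. -/
noncomputable abbrev PST (R : Type*) [CommRing R] : Type _ :=
  Localization.Away (PowerSeries.X (R := R))

noncomputable instance (R : Type*) [CommRing R] : Algebra R (PST R) :=
  ((algebraMap (PowerSeries R) (PST R)).comp (algebraMap R (PowerSeries R))).toAlgebra

/-!
`R⟦X⟧` is the `X`-adic completion of the Noetherian ring `R[X]`, hence flat over `R[X]`, hence
over `R` since `R[X]` is free; localizing at `X` preserves flatness. For faithfulness, reducing
coefficients modulo a proper ideal `I` gives a ring map `R⟦X⟧[1/X] → (R ⧸ I)⸨X⸩` to a nonzero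
ring that kills `I`, so `I • R⟦X⟧[1/X]` is a proper submodule.
-/

open Polynomial

theorem Polynomial.smodEq_span_X_pow_iff {R : Type*} [CommRing R] {n : ℕ} {p q : R[X]} :
    p ≡ q [SMOD (Ideal.span {(X : R[X])} ^ n • ⊤ : Submodule R[X] R[X])] ↔
      ∀ k < n, p.coeff k = q.coeff k := by
  rw [SModEq.sub_mem, smul_eq_mul, Ideal.mul_top, Ideal.span_singleton_pow,
    Ideal.mem_span_singleton, X_pow_dvd_iff]
  simp only [coeff_sub, sub_eq_zero]

namespace PowerSeries

variable {R : Type*} [CommRing R]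

theorem trunc_smodEq_trunc {m n : ℕ} (hmn : m ≤ n) (f : R⟦X⟧) :
    trunc m f ≡ trunc n f
      [SMOD (Ideal.span {(Polynomial.X : R[X])} ^ m • ⊤ : Submodule R[X] R[X])] :=
  smodEq_span_X_pow_iff.mpr fun k hk ↦ by
    rw [coeff_trunc, coeff_trunc, if_pos hk, if_pos (hk.trans_le hmn)]

theorem trunc_smul_smodEq (n : ℕ) (p : R[X]) (f : R⟦X⟧) :
    trunc n (p • f) ≡ p * trunc n f
      [SMOD (Ideal.span {(Polynomial.X : R[X])} ^ n • ⊤ : Submodule R[X] R[X])] := by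
  refine smodEq_span_X_pow_iff.mpr fun k hk ↦ ?_
  rw [Algebra.smul_def, ← trunc_mul_trunc, coeff_trunc, if_pos hk, algebraMap_apply',
    Algebra.algebraMap_self, map_id, id, ← Polynomial.coe_mul, Polynomial.coeff_coe]

noncomputable def truncAdicCauchySequence (f : R⟦X⟧) :
    AdicCompletion.AdicCauchySequence (Ideal.span {(Polynomial.X : R[X])}) R[X] :=
  ⟨fun n ↦ trunc n f, fun hmn ↦ trunc_smodEq_trunc hmn f⟩

theorem truncAdicCauchySequence_apply (f : R⟦X⟧) (n : ℕ) :
    truncAdicCauchySequence f n = trunc n f := rfl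

noncomputable def toAdicCompletion :
    R⟦X⟧ →ₗ[R[X]] AdicCompletion (Ideal.span {(Polynomial.X : R[X])}) R[X] where
  toFun f := AdicCompletion.mk _ _ (truncAdicCauchySequence f)
  map_add' f g := by
    rw [← map_add]
    exact congrArg _ (AdicCompletion.AdicCauchySequence.ext fun n ↦ map_add (trunc n) f g)
  map_smul' p f := AdicCompletion.ext fun n ↦ trunc_smul_smodEq n p f

theorem toAdicCompletion_val (f : R⟦X⟧) (n : ℕ) :
    (toAdicCompletion f).val n = Submodule.Quotient.mk (trunc n f) := rfl

theorem toAdicCompletion_injective : Function.Injective (toAdicCompletion (R := R)) := by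
  refine (injective_iff_map_eq_zero _).mpr fun f hf ↦ PowerSeries.ext fun k ↦ ?_
  have h := congrArg (·.val (k + 1)) hf
  rw [toAdicCompletion_val, AdicCompletion.val_zero_apply, ← Submodule.Quotient.mk_zero] at h
  simpa [coeff_trunc] using smodEq_span_X_pow_iff.mp h k k.lt_succ_self

theorem toAdicCompletion_surjective : Function.Surjective (toAdicCompletion (R := R)) := by
  intro x
  obtain ⟨a, rfl⟩ := AdicCompletion.mk_surjective _ _ x
  refine ⟨mk fun k ↦ (a (k + 1)).coeff k, AdicCompletion.ext fun n ↦ ?_⟩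
  refine smodEq_span_X_pow_iff.mpr fun k hk ↦ ?_
  rw [truncAdicCauchySequence_apply, coeff_trunc, if_pos hk, coeff_mk]
  exact smodEq_span_X_pow_iff.mp (a.property hk) k k.lt_succ_self

noncomputable def linearEquivAdicCompletion :
    R⟦X⟧ ≃ₗ[R[X]] AdicCompletion (Ideal.span {(Polynomial.X : R[X])}) R[X] :=
  .ofBijective toAdicCompletion ⟨toAdicCompletion_injective, toAdicCompletion_surjective⟩

instance flat_of_isNoetherianRing [IsNoetherianRing R] : Module.Flat R R⟦X⟧ :=
  have : Module.Flat R[X] R⟦X⟧ := .of_linearEquiv linearEquivAdicCompletion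
  .trans R R[X] R⟦X⟧

end PowerSeries

theorem Submodule.smul_top_ne_top_of_ringHom {A B C : Type*} [CommSemiring A] [Semiring B]
    [Module A B] [IsScalarTower A B B] [Semiring C] [Nontrivial C] {I : Ideal A} (φ : B →+* C)
    (hφ : ∀ a ∈ I, φ (a • 1) = 0) : I • (⊤ : Submodule A B) ≠ ⊤ := by
  intro h
  have key : ∀ y ∈ I • (⊤ : Submodule A B), φ y = 0 := fun y hy ↦ by
    refine Submodule.smul_induction_on hy (fun a ha y _ ↦ ?_) fun y z hy hz ↦ ?_
    · rw [← smul_one_mul, map_mul, hφ a ha, zero_mul]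
    · rw [map_add, hy, hz, add_zero]
  exact one_ne_zero (map_one φ ▸ key 1 (h.symm ▸ Submodule.mem_top))

namespace PST

variable {R : Type} [CommRing R]

noncomputable def toLaurentSeriesQuotient (I : Ideal R) : PST R →+* LaurentSeries (R ⧸ I) :=
  Localization.awayLift
    ((HahnSeries.ofPowerSeries ℤ (R ⧸ I)).comp (PowerSeries.map (Ideal.Quotient.mk I)))
    PowerSeries.X <| by
      rw [RingHom.comp_apply, PowerSeries.map_X, ← LaurentSeries.coe_algebraMap]
      exact IsLocalization.map_units _
        (⟨_, Submonoid.mem_powers _⟩ : Submonoid.powers PowerSeries.X)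

/- The `R`-module structure on `PST R` is the one `Localization` inherits from `R⟦X⟧`, not the
one of the `Algebra R (PST R)` instance, hence `r • 1` rather than `algebraMap R (PST R) r`. -/
theorem toLaurentSeriesQuotient_smul_one {I : Ideal R} {r : R} (hr : r ∈ I) :
    toLaurentSeriesQuotient I (r • 1) = 0 := by
  rw [← smul_one_smul (PowerSeries R), Algebra.smul_def, mul_one, toLaurentSeriesQuotient,
    IsLocalization.Away.lift_eq, PowerSeries.smul_eq_C_mul, mul_one, RingHom.comp_apply,
    PowerSeries.map_C, Ideal.Quotient.eq_zero_iff_mem.mpr hr, map_zero, map_zero]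

theorem ideal_smul_top_ne_top {I : Ideal R} (hI : I ≠ ⊤) :
    I • (⊤ : Submodule R (PST R)) ≠ ⊤ :=
  have := Ideal.Quotient.nontrivial_iff.mpr hI
  Submodule.smul_top_ne_top_of_ringHom _ fun _ ↦ toLaurentSeriesQuotient_smul_one

end PST

/-- T = R[[X]]_X is a faithfully flat R-algebra. -/
theorem stmt_0 (R : Type) [CommRing R] [IsNoetherianRing R] :
    Module.FaithfullyFlat R (PST R) :=
  have : Module.Flat R (PST R) := .trans R (PowerSeries R) (PST R)
  (Module.FaithfullyFlat.iff_flat_and_proper_ideal R (PST R)).mpr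
    ⟨this, fun _ ↦ PST.ideal_smul_top_ne_top⟩
end

section
/- Let R be a commutative Noetherian ring, S = R[[X]] and T = S_X. If P is a prime ideal of R, then the extension PT is a prime ideal of T and PT ∩ R = P. -/
set_option maxHeartbeats 1000000
set_option synthInstance.maxHeartbeats 1000000

/-!
Since `P` is finitely generated, a power series lies in `P R⟦X⟧` exactly when all its
coefficients lie in `P`, so `P R⟦X⟧` is the kernel of `R⟦X⟧ → (R ⧸ P)⟦X⟧` and is prime; it
contracts to `P` and contains no power of `X`, so both properties survive localization at `X`.
-/

namespace PowerSeries

variable {R : Type*} [CommRing R] {I : Ideal R}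

theorem mem_ker_map_mk_iff {f : R⟦X⟧} :
    f ∈ RingHom.ker (map (Ideal.Quotient.mk I)) ↔ ∀ n, coeff n f ∈ I := by
  simp only [RingHom.mem_ker, PowerSeries.ext_iff, coeff_map, map_zero,
    Ideal.Quotient.eq_zero_iff_mem]

theorem map_C_le_ker_map_mk (I : Ideal R) :
    I.map C ≤ RingHom.ker (map (Ideal.Quotient.mk I)) :=
  Ideal.map_le_iff_le_comap.2 fun r hr => by
    simp [map_C, Ideal.Quotient.eq_zero_iff_mem.2 hr]

theorem ker_map_mk_le_map_C (hI : I.FG) :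
    RingHom.ker (map (Ideal.Quotient.mk I)) ≤ I.map C := by
  intro f hf
  obtain ⟨s, rfl⟩ := hI
  have hcoeff (n : ℕ) : ∃ g : R → R, ∑ a ∈ s, g a • a = coeff n f := by
    obtain ⟨g, -, hg⟩ := Submodule.mem_span_finset.1 (mem_ker_map_mk_iff.1 hf n)
    exact ⟨g, hg⟩
  choose g hg using hcoeff
  have hf_eq : f = ∑ a ∈ s, mk (fun n => g n a) * C a := by
    ext n
    simp [map_sum, coeff_mul_C, ← hg n, smul_eq_mul]
  rw [hf_eq]
  exact Ideal.sum_mem _ fun a ha =>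
    Ideal.mul_mem_left _ _ (Ideal.mem_map_of_mem _ (Ideal.subset_span ha))

theorem map_C_eq_ker_map_mk (hI : I.FG) :
    I.map C = RingHom.ker (map (Ideal.Quotient.mk I)) :=
  le_antisymm (map_C_le_ker_map_mk I) (ker_map_mk_le_map_C hI)

theorem isPrime_map_C_of_isPrime (hI : I.FG) [I.IsPrime] : (I.map C).IsPrime := by
  rw [map_C_eq_ker_map_mk hI]
  exact RingHom.ker_isPrime _

theorem comap_C_map_C (I : Ideal R) : (I.map C).comap C = I :=
  le_antisymm (fun r hr => by simpa using mem_ker_map_mk_iff.1 (map_C_le_ker_map_mk I hr) 0)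
    Ideal.le_comap_map

theorem disjoint_powers_X_map_C (hI : I ≠ ⊤) :
    Disjoint (Submonoid.powers (X : R⟦X⟧) : Set R⟦X⟧) (I.map C) := by
  rw [Set.disjoint_left]
  rintro _ ⟨n, rfl⟩ hX
  have hone : (1 : R) ∈ I := by
    simpa using mem_ker_map_mk_iff.1 (map_C_le_ker_map_mk I hX) n
  exact hI ((Ideal.eq_top_iff_one I).2 hone)

end PowerSeries

open PowerSeries in
/-- PT is prime and PT ∩ R = P. -/
theorem stmt_1 (R : Type) [CommRing R] [IsNoetherianRing R]
    (P : Ideal R) [P.IsPrime] :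
    (P.map (algebraMap R (PST R))).IsPrime ∧
    (P.map (algebraMap R (PST R))).comap (algebraMap R (PST R)) = P := by
  have hprime := isPrime_map_C_of_isPrime (IsNoetherian.noetherian P)
  have hdisj := disjoint_powers_X_map_C (Ideal.IsPrime.ne_top ‹P.IsPrime›)
  have hmap : P.map (algebraMap R (PST R)) = (P.map C).map (algebraMap R⟦X⟧ (PST R)) :=
    (Ideal.map_map _ _).symm
  rw [hmap]
  refine ⟨IsLocalization.isPrime_of_isPrime_disjoint _ _ _ hprime hdisj, ?_⟩
  rw [show algebraMap R (PST R) = (algebraMap R⟦X⟧ (PST R)).comp C from rfl,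
    ← Ideal.comap_comap, ← Ideal.under_def,
    IsLocalization.under_map_of_isPrime_disjoint _ _ hprime hdisj, comap_C_map_C]
end

section
/- Let T be a Noetherian ring whose Jacobson radical J is a radical ideal equal to the intersection of the maximal ideals in any infinite subfamily of its (infinitely many) maximal ideals. Then J is a prime ideal of T. -/
set_option maxHeartbeats 1000000
set_option synthInstance.maxHeartbeats 1000000

/-!
Since `a * b ∈ J` lies in every maximal ideal, each maximal ideal contains `a` or `b`, so one of
the two lies in infinitely many maximal ideals, hence in their intersection, which is `J`.
-/

namespace Ideal

variable {R : Type*} [CommSemiring R] {S : Set (Ideal R)}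

theorem mem_sInf_of_infinite_setOf_mem (hS : ∀ Λ ⊆ S, Λ.Infinite → sInf Λ = sInf S) {a : R}
    (ha : {p ∈ S | a ∈ p}.Infinite) : a ∈ sInf S := by
  rw [← hS _ (Set.sep_subset S _) ha]
  exact mem_sInf.mpr fun _ hp ↦ hp.2

theorem isPrime_sInf_of_infinite (hprime : ∀ p ∈ S, p.IsPrime) (hinf : S.Infinite)
    (hS : ∀ Λ ⊆ S, Λ.Infinite → sInf Λ = sInf S) : (sInf S).IsPrime := by
  refine ⟨?_, fun {a b} hab ↦ ?_⟩
  · obtain ⟨p, hp⟩ := hinf.nonempty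
    exact ne_top_of_le_ne_top (hprime p hp).ne_top (sInf_le hp)
  · have hcover : S ⊆ {p ∈ S | a ∈ p} ∪ {p ∈ S | b ∈ p} := fun p hp ↦
      ((hprime p hp).mem_or_mem (mem_sInf.mp hab hp)).imp (⟨hp, ·⟩) (⟨hp, ·⟩)
    exact (Set.infinite_union.mp (hinf.mono hcover)).imp
      (mem_sInf_of_infinite_setOf_mem hS) (mem_sInf_of_infinite_setOf_mem hS)

theorem jacobson_bot_eq_sInf_isMaximal {A : Type*} [CommRing A] :
    (⊥ : Ideal A).jacobson = sInf {m : Ideal A | m.IsMaximal} := by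
  simp only [jacobson, bot_le, true_and]

end Ideal

theorem stmt_9_general (T : Type) [CommRing T]
    (hinf : {m : Ideal T | m.IsMaximal}.Infinite)
    (hJ : ∀ Λ ⊆ {m : Ideal T | m.IsMaximal}, Λ.Infinite →
      sInf Λ = (⊥ : Ideal T).jacobson) :
    ((⊥ : Ideal T).jacobson).IsPrime := by
  rw [Ideal.jacobson_bot_eq_sInf_isMaximal] at hJ ⊢
  exact Ideal.isPrime_sInf_of_infinite (fun m hm ↦ hm.isPrime) hinf hJ

/-- if T is Noetherian with infinitely many maximal ideals and the
intersection of any infinite family of maximal ideals equals the Jacobson radical J,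
then J is prime. -/
theorem stmt_9 (T : Type) [CommRing T] [IsNoetherianRing T]
    (hinf : {m : Ideal T | m.IsMaximal}.Infinite)
    (hJ : ∀ Λ ⊆ {m : Ideal T | m.IsMaximal}, Λ.Infinite →
      sInf Λ = (⊥ : Ideal T).jacobson) :
    ((⊥ : Ideal T).jacobson).IsPrime :=
  stmt_9_general T hinf hJ
end

section
/- Let R be a Noetherian ring with infinitely many maximal ideals, all of the same height d. Then the collection C of all intersections ∩_{m ∈ F} m over infinite subsets F of the set of maximal ideals has a maximal element Q, and for any such maximal Q = ∩_{m ∈ F} m, one has Q = ∩_{m ∈ G} m for every infinite subset G ⊆ F. -/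
set_option maxHeartbeats 1000000
set_option synthInstance.maxHeartbeats 1000000

theorem stmt_17_general (R : Type) [CommRing R] [IsNoetherianRing R]
    (hinf : {m : Ideal R | m.IsMaximal}.Infinite) :
    ∃ F ⊆ {m : Ideal R | m.IsMaximal}, F.Infinite ∧
      (∀ G ⊆ {m : Ideal R | m.IsMaximal}, G.Infinite →
        sInf F ≤ sInf G → sInf G = sInf F) ∧
      (∀ G ⊆ F, G.Infinite → sInf G = sInf F) := by
  obtain ⟨F, ⟨hF, hFinf⟩, hmax⟩ := exists_maximalFor_of_wellFoundedGT
    (fun F => F ⊆ {m : Ideal R | m.IsMaximal} ∧ F.Infinite) sInf ⟨_, subset_rfl, hinf⟩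
  have hQ : ∀ G ⊆ {m : Ideal R | m.IsMaximal}, G.Infinite → sInf F ≤ sInf G → sInf G = sInf F :=
    fun G hG hGinf hle => (hmax ⟨hG, hGinf⟩ hle).antisymm hle
  exact ⟨F, hF, hFinf, hQ, fun G hGF hGinf => hQ G (hGF.trans hF) hGinf (sInf_le_sInf hGF)⟩

/-- for R Noetherian with countably infinitely many maximal ideals,
all of height d, the family of intersections of infinite sets of maximal ideals has
a maximal element Q = ∩_{m ∈ F} m, and Q = ∩_{m ∈ G} m for every infinite G ⊆ F. -/
theorem stmt_17 (R : Type) [CommRing R] [IsNoetherianRing R] (d : ℕ)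
    (hcount : {m : Ideal R | m.IsMaximal}.Countable)
    (hinf : {m : Ideal R | m.IsMaximal}.Infinite)
    (hht : ∀ (m : Ideal R) (hm : m.IsMaximal),
      @ht R _ m hm.isPrime = (d : WithBot (WithTop ℕ))) :
    ∃ F ⊆ {m : Ideal R | m.IsMaximal}, F.Infinite ∧
      (∀ G ⊆ {m : Ideal R | m.IsMaximal}, G.Infinite →
        sInf F ≤ sInf G → sInf G = sInf F) ∧
      (∀ G ⊆ F, G.Infinite → sInf G = sInf F) :=
  stmt_17_general R hinf
end

section
/- With the construction of localizing a Noetherian ring R at S = R \ ∪_{m ∈ F} m, where F is an infinite set of maximal ideals of R with Q = ∩_{m ∈ F} m maximal among such intersections: for any subset Λ ⊆ F, one has (∩_{m ∈ Λ} m)·T = ∩_{m ∈ Λ} mT, where T = S^{-1}R. -/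
set_option maxHeartbeats 1000000
set_option synthInstance.maxHeartbeats 1000000

/-- The multiplicative set of elements outside every ideal in `F`, for a family `F`
of prime ideals. -/
def outsideAll (R : Type*) [CommRing R] (F : Set (Ideal R))
    (hF : ∀ m ∈ F, m.IsPrime) : Submonoid R where
  carrier := {x | ∀ m ∈ F, x ∉ m}
  one_mem' := fun m hm h1 => (hF m hm).ne_top ((Ideal.eq_top_iff_one m).mpr h1)
  mul_mem' := fun {a b} ha hb m hm hab =>
    ((hF m hm).mem_or_mem hab).elim (ha m hm) (hb m hm)

/-
Each `m ∈ Λ` is a prime disjoint from `S`, so it is contracted from `T`: `(mT) ∩ R = m`.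
Hence `⋂ mT` contracts to `⋂ m`, and since every ideal of a localization is the extension
of its contraction, `(⋂ m)T = ⋂ mT`.
-/

theorem outsideAll_disjoint (R : Type*) [CommRing R] (F : Set (Ideal R))
    (hF : ∀ m ∈ F, m.IsPrime) {m : Ideal R} (hm : m ∈ F) :
    Disjoint (outsideAll R F hF : Set R) m :=
  Set.disjoint_left.mpr fun _ hx => hx m hm

theorem IsLocalization.map_sInf_of_isPrime_disjoint {R : Type*} (S : Type*) [CommRing R]
    [CommRing S] [Algebra R S] (M : Submonoid R) [IsLocalization M S] (Λ : Set (Ideal R))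
    (hprime : ∀ p ∈ Λ, p.IsPrime) (hdisj : ∀ p ∈ Λ, Disjoint (M : Set R) p) :
    (sInf Λ).map (algebraMap R S) = ⨅ p ∈ Λ, p.map (algebraMap R S) := by
  have hcomap : (⨅ p ∈ Λ, p.map (algebraMap R S)).comap (algebraMap R S) = sInf Λ := by
    simp only [Ideal.comap_iInf, sInf_eq_iInf]
    exact iInf_congr fun p => iInf_congr fun hp =>
      under_map_of_isPrime_disjoint M S (hprime p hp) (hdisj p hp)
  rw [← hcomap, map_under M S]

theorem stmt_18_general
    (R : Type) [CommRing R]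
    (F : Set (Ideal R)) (hFmax : ∀ m ∈ F, m.IsMaximal)
    (Λ : Set (Ideal R)) (hΛ : Λ ⊆ F) :
    letI T := Localization (outsideAll R F (fun m hm => (hFmax m hm).isPrime))
    (sInf Λ).map (algebraMap R T) = ⨅ m ∈ Λ, Ideal.map (algebraMap R T) m :=
  IsLocalization.map_sInf_of_isPrime_disjoint _ _ Λ
    (fun m hm => (hFmax m (hΛ hm)).isPrime) (fun _ hm => outsideAll_disjoint R F _ (hΛ hm))

/-- with T the localization of R away from the union of the maximal
ideals in F, extension of ideals to T commutes with the (possibly infinite)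
intersection over any subset Λ of F. -/
theorem stmt_18 (K : Type) [Field K] [Uncountable K]
    (R : Type) [CommRing R] [IsNoetherianRing R] [Algebra K R] (d : ℕ)
    (hcount : {m : Ideal R | m.IsMaximal}.Countable)
    (hinf : {m : Ideal R | m.IsMaximal}.Infinite)
    (hht : ∀ (m : Ideal R) (hm : m.IsMaximal),
      @ht R _ m hm.isPrime = (d : WithBot (WithTop ℕ)))
    (F : Set (Ideal R)) (hFmax : ∀ m ∈ F, m.IsMaximal) (hF : F.Infinite)
    (hmaximal : ∀ G ⊆ {m : Ideal R | m.IsMaximal}, G.Infinite →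
      sInf F ≤ sInf G → sInf G = sInf F)
    (Λ : Set (Ideal R)) (hΛ : Λ ⊆ F) :
    letI T := Localization (outsideAll R F (fun m hm => (hFmax m hm).isPrime))
    (sInf Λ).map (algebraMap R T) = ⨅ m ∈ Λ, Ideal.map (algebraMap R T) m :=
  stmt_18_general R F hFmax Λ hΛ
end

section
/- With R, F, Q, S, T as in the construction (T = S^{-1}R with S = R \ ∪_{m∈F} m): the maximal ideals of T are precisely the ideals mT for m ∈ F, these are pairwise distinct, and QT equals the Jacobson radical of T. -/
set_option maxHeartbeats 1000000
set_option synthInstance.maxHeartbeats 1000000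

/-!
A maximal ideal of `T` contracts to an ideal `p` of `R` missing `S`, i.e. `p ⊆ ⋃_{m ∈ F} m`.
Over an uncountable field, a finitely generated ideal covered by countably many ideals lies in
one of them: if `x + t • y` lies in `J_t` for every `t : K`, then two distinct scalars `t ≠ t'`
give the same `J`, which then contains `x` and `y`. Hence `p ≤ m` for some `m ∈ F`, so the
maximal ideals of `T` are the `mT`, and `QT` is their intersection because every `m ∈ F`
is contracted from `mT`.
-/

section CountableAvoidance

variable {K R : Type*} [Field K] [CommRing R] [Algebra K R]

theorem Ideal.mem_of_add_smul_mem_of_ne {J : Ideal R} {x y : R} {t t' : K} (hne : t ≠ t')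
    (ht : x + t • y ∈ J) (ht' : x + t' • y ∈ J) : x ∈ J ∧ y ∈ J := by
  have hy : y ∈ J := by
    have h : (t - t') • y ∈ J := by simpa [sub_smul] using J.sub_mem ht ht'
    simpa [smul_smul, inv_mul_cancel₀ (sub_ne_zero.2 hne)] using J.smul_of_tower_mem (t - t')⁻¹ h
  exact ⟨by simpa using J.sub_mem ht (J.smul_of_tower_mem t hy), hy⟩

variable (K) [Uncountable K] {C : Set (Ideal R)} {I : Ideal R}
include K

theorem Ideal.exists_mem_and_subset_of_subset_biUnion_of_countable (hC : C.Countable)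
    (hI : (I : Set R) ⊆ ⋃ J ∈ C, (J : Set R)) (s : Finset R) (hs : (s : Set R) ⊆ I) :
    ∀ x ∈ I, ∃ J ∈ C, x ∈ J ∧ (s : Set R) ⊆ J := by
  classical
  induction s using Finset.induction_on with
  | empty => simpa using fun x hx => hI hx
  | insert y s _ ih =>
    rw [Finset.coe_insert, Set.insert_subset_iff] at hs
    intro x hx
    have hxy (t : K) : ∃ J ∈ C, x + t • y ∈ J ∧ (s : Set R) ⊆ J :=
      ih hs.2 _ (I.add_mem hx (I.smul_of_tower_mem t hs.1))
    choose f hfC hf using hxy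
    have := hC.to_subtype
    obtain ⟨t, t', hft, hne⟩ : ∃ t t', f t = f t' ∧ t ≠ t' := by
      simpa [Function.Injective, Subtype.ext_iff] using
        not_injective_uncountable_countable (fun t => (⟨f t, hfC t⟩ : C))
    obtain ⟨hxJ, hyJ⟩ := Ideal.mem_of_add_smul_mem_of_ne hne (hf t).1 (hft ▸ (hf t').1)
    exact ⟨f t, hfC t, hxJ, by simpa [Set.insert_subset_iff] using ⟨hyJ, (hf t).2⟩⟩

theorem Ideal.exists_le_of_subset_biUnion_of_countable (hC : C.Countable) (hfg : I.FG)
    (hI : (I : Set R) ⊆ ⋃ J ∈ C, (J : Set R)) : ∃ J ∈ C, I ≤ J := by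
  obtain ⟨s, rfl⟩ := hfg
  obtain ⟨J, hJC, -, hsJ⟩ := Ideal.exists_mem_and_subset_of_subset_biUnion_of_countable
    K hC hI s Ideal.subset_span 0 (Ideal.zero_mem _)
  exact ⟨J, hJC, Ideal.span_le.2 hsJ⟩

end CountableAvoidance

namespace outsideAll

variable {R : Type*} [CommRing R] {F : Set (Ideal R)} (hF : ∀ m ∈ F, m.IsPrime)
  (T : Type*) [CommRing T] [Algebra R T] [IsLocalization (outsideAll R F hF) T]
include hF

theorem disjoint_of_mem {m : Ideal R} (hm : m ∈ F) : Disjoint (outsideAll R F hF : Set R) m :=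
  Set.disjoint_left.2 fun _ hx => hx m hm

theorem under_map {m : Ideal R} (hm : m ∈ F) : (m.map (algebraMap R T)).under R = m :=
  IsLocalization.under_map_of_isPrime_disjoint _ T (hF m hm) (disjoint_of_mem hF hm)

theorem isPrime_map {m : Ideal R} (hm : m ∈ F) : (m.map (algebraMap R T)).IsPrime :=
  IsLocalization.isPrime_of_isPrime_disjoint _ T m (hF m hm) (disjoint_of_mem hF hm)

theorem injOn_map : Set.InjOn (fun m : Ideal R => m.map (algebraMap R T)) F :=
  fun _ hm _ hm' h => (under_map hF T hm).symm.trans ((congrArg _ h).trans (under_map hF T hm'))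

theorem map_sInf :
    (sInf F).map (algebraMap R T) = sInf ((fun m : Ideal R => m.map (algebraMap R T)) '' F) := by
  have hunder : (sInf ((fun m : Ideal R => m.map (algebraMap R T)) '' F)).under R = sInf F := by
    rw [Ideal.under, Ideal.comap_sInf', Set.image_image,
      Set.image_congr fun _ => under_map hF T, Set.image_id', sInf_eq_iInf]
  rw [← hunder, IsLocalization.map_under (outsideAll R F hF)]

variable {hF} {T}
variable (havoid : ∀ I : Ideal R, (I : Set R) ⊆ ⋃ m ∈ F, (m : Set R) → ∃ m ∈ F, I ≤ m)
include havoid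

theorem exists_eq_map_of_isMaximal {M : Ideal T} (hM : M.IsMaximal) :
    ∃ m ∈ F, M = m.map (algebraMap R T) := by
  have hunder : (M.under R : Set R) ⊆ ⋃ m ∈ F, (m : Set R) := by
    intro x hx
    have hxS : x ∉ outsideAll R F hF :=
      Set.disjoint_right.1 ((IsLocalization.disjoint_under_iff _ T M).2 hM.ne_top) hx
    simpa [outsideAll] using hxS
  obtain ⟨m, hmF, hle⟩ := havoid _ hunder
  refine ⟨m, hmF, hM.eq_of_le (isPrime_map hF T hmF).ne_top ?_⟩
  simpa [IsLocalization.map_under (outsideAll R F hF)] using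
    Ideal.map_mono (f := algebraMap R T) hle

theorem isMaximal_map (hFmax : ∀ m ∈ F, m.IsMaximal) {m : Ideal R} (hm : m ∈ F) :
    (m.map (algebraMap R T)).IsMaximal := by
  obtain ⟨M, hM, hle⟩ :=
    Ideal.exists_le_maximal (m.map (algebraMap R T)) (isPrime_map hF T hm).ne_top
  obtain ⟨m', hm', rfl⟩ := exists_eq_map_of_isMaximal havoid hM
  have hmm' : m ≤ m' := by
    simpa only [under_map hF T hm, under_map hF T hm'] using
      Ideal.comap_mono (f := algebraMap R T) hle
  rwa [(hFmax m hm).eq_of_le (hFmax m' hm').ne_top hmm']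

theorem setOf_isMaximal_eq_image (hFmax : ∀ m ∈ F, m.IsMaximal) :
    {M : Ideal T | M.IsMaximal} = (fun m : Ideal R => m.map (algebraMap R T)) '' F := by
  ext M
  constructor
  · intro hM
    obtain ⟨m, hm, rfl⟩ := exists_eq_map_of_isMaximal havoid hM
    exact ⟨m, hm, rfl⟩
  · rintro ⟨m, hm, rfl⟩
    exact isMaximal_map havoid hFmax hm

end outsideAll

theorem stmt_19_general (K : Type) [Field K] [Uncountable K]
    (R : Type) [CommRing R] [IsNoetherianRing R] [Algebra K R]
    (hcount : {m : Ideal R | m.IsMaximal}.Countable)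
    (F : Set (Ideal R)) (hFmax : ∀ m ∈ F, m.IsMaximal)
 :
    letI T := Localization (outsideAll R F (fun m hm => (hFmax m hm).isPrime))
    {I : Ideal T | I.IsMaximal} = (fun m : Ideal R => m.map (algebraMap R T)) '' F ∧
    Set.InjOn (fun m : Ideal R => m.map (algebraMap R T)) F ∧
    (sInf F).map (algebraMap R T) = (⊥ : Ideal T).jacobson := by
  have havoid (I : Ideal R) (hI : (I : Set R) ⊆ ⋃ m ∈ F, (m : Set R)) : ∃ m ∈ F, I ≤ m :=
    Ideal.exists_le_of_subset_biUnion_of_countable K (hcount.mono hFmax)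
      (IsNoetherian.noetherian I) hI
  have hmax := outsideAll.setOf_isMaximal_eq_image
    (T := Localization (outsideAll R F fun m hm => (hFmax m hm).isPrime)) havoid hFmax
  refine ⟨hmax, outsideAll.injOn_map _ (Localization _), ?_⟩
  rw [outsideAll.map_sInf, ← hmax]
  simp only [Ideal.jacobson, bot_le, true_and]

/-- with T as in the construction, the maximal ideals of T are exactly
the (pairwise distinct) mT for m ∈ F, and QT is the Jacobson radical of T. -/
theorem stmt_19 (K : Type) [Field K] [Uncountable K]
    (R : Type) [CommRing R] [IsNoetherianRing R] [Algebra K R] (d : ℕ)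
    (hcount : {m : Ideal R | m.IsMaximal}.Countable)
    (hinf : {m : Ideal R | m.IsMaximal}.Infinite)
    (hht : ∀ (m : Ideal R) (hm : m.IsMaximal),
      @ht R _ m hm.isPrime = (d : WithBot (WithTop ℕ)))
    (F : Set (Ideal R)) (hFmax : ∀ m ∈ F, m.IsMaximal) (hF : F.Infinite)
    (hmaximal : ∀ G ⊆ {m : Ideal R | m.IsMaximal}, G.Infinite →
      sInf F ≤ sInf G → sInf G = sInf F)
 :
    letI T := Localization (outsideAll R F (fun m hm => (hFmax m hm).isPrime))
    {I : Ideal T | I.IsMaximal} = (fun m : Ideal R => m.map (algebraMap R T)) '' F ∧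
    Set.InjOn (fun m : Ideal R => m.map (algebraMap R T)) F ∧
    (sInf F).map (algebraMap R T) = (⊥ : Ideal T).jacobson :=
  stmt_19_general K R hcount F hFmax
end
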